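/- arXiv:1211.2800 — 3 statements merged into one kernel-verified Lean document; each statement's English description precedes it below -/
import Mathlib

section
/- With E₁, E₂, F, P, I, Z, O, G as in the context: (a) the Fréchet derivative of G at (0,0) is the continuous linear map (γ,e) ↦ γ + P(e); it is surjective and its kernel equals {(0,e) : e ∈ I}. (b) There exist an open neighbourhood V of 0 in I, an open neighbourhood W of (0,0) in O × E₁, and C^∞ maps φ_O : V → O and φ_Z : V → Z with φ_O(0) = 0 and φ_Z(0) = 0, such that G⁻¹(0) ∩ W = {(φ_O(i), i + φ_Z(i)) : i ∈ V}; that is, near the origin the zero set of G is the graph of a smooth map defined on the kernel of the derivative of G at (0,0). -/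
open ContDiff

set_option maxHeartbeats 1000000 in
/-- Implicit-function-theorem setup for a smooth map `F : E₁ → E₂` between Banach spaces with
Fredholm-type linearization `P` at `0`: with `G(γ,e) := γ + F(e)` on `O × E₁`, (a) the derivative
of `G` at `(0,0)` is `(γ,e) ↦ γ + P e`, is surjective, and has kernel `{(0,e) : e ∈ ker P}`;
(b) near the origin the zero set of `G` is the graph of a smooth map defined on `ker P`. -/
theorem zero_set_of_G_is_graph
    (E₁ E₂ : Type*) [NormedAddCommGroup E₁] [NormedSpace ℝ E₁] [CompleteSpace E₁]
    [NormedAddCommGroup E₂] [NormedSpace ℝ E₂] [CompleteSpace E₂]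
    (F : E₁ → E₂) (U : Set E₁) (hUopen : IsOpen U) (hU0 : (0 : E₁) ∈ U)
    (hF : ContDiffOn ℝ (⊤ : ℕ∞) F U) (hF0 : F 0 = 0)
    (P : E₁ →L[ℝ] E₂) (hP : HasFDerivAt F P 0)
    (hkerfin : FiniteDimensional ℝ (LinearMap.ker (P : E₁ →ₗ[ℝ] E₂)))
    (Z : Submodule ℝ E₁) (hZclosed : IsClosed (Z : Set E₁))
    (hcompl₁ : IsCompl (LinearMap.ker (P : E₁ →ₗ[ℝ] E₂)) Z)
    (O : Submodule ℝ E₂) (hOfin : FiniteDimensional ℝ O)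
    (hrangeclosed : IsClosed ((LinearMap.range (P : E₁ →ₗ[ℝ] E₂) : Submodule ℝ E₂) : Set E₂))
    (hcompl₂ : IsCompl O (LinearMap.range (P : E₁ →ₗ[ℝ] E₂)))
    (G : O × E₁ → E₂) (hG : ∀ p : O × E₁, G p = (p.1 : E₂) + F p.2) :
    (∀ p : O × E₁, fderiv ℝ G (0, 0) p = (p.1 : E₂) + P p.2) ∧
    Function.Surjective (fderiv ℝ G (0, 0)) ∧
    ({p : O × E₁ | fderiv ℝ G (0, 0) p = 0} =
      {p : O × E₁ | p.1 = 0 ∧ p.2 ∈ LinearMap.ker (P : E₁ →ₗ[ℝ] E₂)}) ∧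
    ∃ (V : Set (LinearMap.ker (P : E₁ →ₗ[ℝ] E₂))) (W : Set (O × E₁))
      (φO : (LinearMap.ker (P : E₁ →ₗ[ℝ] E₂)) → O) (φZ : (LinearMap.ker (P : E₁ →ₗ[ℝ] E₂)) → Z),
      IsOpen V ∧ (0 : LinearMap.ker (P : E₁ →ₗ[ℝ] E₂)) ∈ V ∧
      IsOpen W ∧ ((0 : O), (0 : E₁)) ∈ W ∧
      ContDiffOn ℝ (⊤ : ℕ∞) φO V ∧ ContDiffOn ℝ (⊤ : ℕ∞) φZ V ∧
      φO 0 = 0 ∧ φZ 0 = 0 ∧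
      {p : O × E₁ | G p = 0} ∩ W =
        (fun i : LinearMap.ker (P : E₁ →ₗ[ℝ] E₂) => (φO i, (i : E₁) + (φZ i : E₁))) '' V := by
  have hGfun : G = fun p : O × E₁ => (p.1 : E₂) + F p.2 := funext hG
  subst hGfun
  set I : Submodule ℝ E₁ := LinearMap.ker (P : E₁ →ₗ[ℝ] E₂) with hIdef
  have hIclosed : IsClosed (I : Set E₁) := Submodule.closed_of_finiteDimensional I
  have hOclosed : IsClosed (O : Set E₂) := Submodule.closed_of_finiteDimensional O
  haveI : CompleteSpace I := hIclosed.completeSpace_coe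
  haveI : CompleteSpace O := hOclosed.completeSpace_coe
  -- continuous projections
  set πI : E₁ →L[ℝ] I := I.linearProjOfClosedCompl Z hcompl₁ hIclosed hZclosed with hπIdef
  set πZ : E₁ →L[ℝ] Z := Z.linearProjOfClosedCompl I hcompl₁.symm hZclosed hIclosed with hπZdef
  have hdec : ∀ e : E₁, (πI e : E₁) + (πZ e : E₁) = e := fun e =>
    Submodule.projection_add_projection_eq_self hcompl₁ e
  have hπI_left : ∀ i : I, πI (i : E₁) = i := fun i =>
    Submodule.projectionOnto_apply_left hcompl₁ i
  have hπI_right : ∀ z ∈ Z, πI z = 0 := fun z hz =>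
    Submodule.projectionOnto_apply_right hcompl₁ ⟨z, hz⟩
  -- the derivative D of G at (0,0)
  set D : O × E₁ →L[ℝ] E₂ :=
    (O.subtypeL.comp (ContinuousLinearMap.fst ℝ O E₁)) +
      (P.comp (ContinuousLinearMap.snd ℝ O E₁)) with hDdef
  have hDapp : ∀ p : O × E₁, D p = (p.1 : E₂) + P p.2 := fun p => rfl
  have hDG : HasFDerivAt (fun p : O × E₁ => (p.1 : E₂) + F p.2) D ((0 : O), (0 : E₁)) := by
    have h1 : HasFDerivAt (fun p : O × E₁ => (p.1 : E₂))
        (O.subtypeL.comp (ContinuousLinearMap.fst ℝ O E₁)) ((0 : O), (0 : E₁)) :=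
      (O.subtypeL.comp (ContinuousLinearMap.fst ℝ O E₁)).hasFDerivAt
    have h2 : HasFDerivAt (fun p : O × E₁ => F p.2)
        (P.comp (ContinuousLinearMap.snd ℝ O E₁)) ((0 : O), (0 : E₁)) :=
      hP.comp ((0 : O), (0 : E₁)) (ContinuousLinearMap.snd ℝ O E₁).hasFDerivAt
    exact h1.add h2
  have hfd : fderiv ℝ (fun p : O × E₁ => (p.1 : E₂) + F p.2) ((0 : O), (0 : E₁)) = D :=
    hDG.fderiv
  -- surjectivity of D
  have hDsurj : Function.Surjective D := by
    intro y
    have hy : y ∈ O ⊔ LinearMap.range (P : E₁ →ₗ[ℝ] E₂) := by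
      rw [hcompl₂.sup_eq_top]; trivial
    rcases Submodule.mem_sup.mp hy with ⟨o, ho, r, hr, hsum⟩
    rcases hr with ⟨e, he⟩
    exact ⟨(⟨o, ho⟩, e), by rw [hDapp]; simp only [ContinuousLinearMap.coe_coe] at he; simp [he, hsum]⟩
  -- kernel of D
  have hDker : ∀ p : O × E₁, D p = 0 → p.1 = 0 ∧ p.2 ∈ I := by
    intro p hp
    rw [hDapp] at hp
    have h1 : (p.1 : E₂) ∈ LinearMap.range (P : E₁ →ₗ[ℝ] E₂) :=
      ⟨-p.2, by rw [map_neg]; exact (eq_neg_of_add_eq_zero_left hp).symm⟩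
    have h0 : (p.1 : E₂) = 0 :=
      Submodule.disjoint_def.mp hcompl₂.disjoint _ p.1.2 h1
    have hp1 : p.1 = 0 := Subtype.ext h0
    refine ⟨hp1, ?_⟩
    rw [h0, zero_add] at hp
    exact hp
  refine ⟨by rw [hfd]; exact hDapp, by rw [hfd]; exact hDsurj, ?_, ?_⟩
  · rw [hfd]
    ext p
    simp only [Set.mem_setOf_eq]
    constructor
    · exact hDker p
    · rintro ⟨h1, h2⟩
      rw [hDapp, h1]
      have : P p.2 = 0 := h2
      simp [this]
  -- part (b)
  · -- the continuous linear map A : O × E₁ → I × E₂, an equivalence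
    set A : O × E₁ →L[ℝ] I × E₂ :=
      (πI.comp (ContinuousLinearMap.snd ℝ O E₁)).prod D with hAdef
    have hAapp : ∀ p : O × E₁, A p = (πI p.2, (p.1 : E₂) + P p.2) := fun p => rfl
    have hA0 : ∀ p : O × E₁, A p = 0 → p = 0 := by
      intro p hp
      rw [hAapp] at hp
      have h1 : πI p.2 = 0 := congrArg Prod.fst hp
      have h2 : (p.1 : E₂) + P p.2 = 0 := congrArg Prod.snd hp
      obtain ⟨hp1, hp2⟩ := hDker p (by rw [hDapp]; exact h2)
      have : πI p.2 = ⟨p.2, hp2⟩ := hπI_left ⟨p.2, hp2⟩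
      have hp2' : p.2 = 0 := by
        have := this.symm.trans h1
        exact congrArg Subtype.val this
      exact Prod.ext hp1 hp2'
    have hAinj : Function.Injective A := by
      intro p q hpq
      have : A (p - q) = 0 := by rw [map_sub, hpq, sub_self]
      have := hA0 _ this
      exact sub_eq_zero.mp this
    have hAsurj : Function.Surjective A := by
      rintro ⟨i, y⟩
      obtain ⟨q, hq⟩ := hDsurj y
      set z : E₁ := (πZ q.2 : E₁) with hzdef
      have hPz : P z = P q.2 := by
        have hd := hdec q.2
        have hPI : P (πI q.2 : E₁) = 0 := (πI q.2).2
        calc P z = P ((πI q.2 : E₁) + z) - P (πI q.2 : E₁) := by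
              rw [map_add, hPI]; abel
          _ = P q.2 := by rw [hd, hPI, sub_zero]
      refine ⟨(q.1, (i : E₁) + z), ?_⟩
      rw [hAapp]
      have hπ : πI ((i : E₁) + z) = i := by
        rw [map_add, hπI_left i, hπI_right z (πZ q.2).2, add_zero]
      have hPi : P (i : E₁) = 0 := i.2
      have h2 : (q.1 : E₂) + P ((i : E₁) + z) = y := by
        rw [map_add, hPi, zero_add, hPz, ← hDapp q, hq]
      exact Prod.ext hπ h2
    set Aeq : (O × E₁) ≃L[ℝ] I × E₂ :=
      ContinuousLinearEquiv.ofBijective A (LinearMap.ker_eq_bot.mpr hAinj)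
        (LinearMap.range_eq_top.mpr hAsurj) with hAeqdef
    have hAeqcoe : (Aeq : (O × E₁) →L[ℝ] I × E₂) = A :=
      ContinuousLinearEquiv.coe_ofBijective _ _ _
    -- the map H
    set H : O × E₁ → I × E₂ := fun p => (πI p.2, (p.1 : E₂) + F p.2) with hHdef
    have hH0 : H ((0 : O), (0 : E₁)) = 0 := by
      simp only [hHdef, hF0, map_zero, Submodule.coe_zero, add_zero]
      rfl
    have hHderiv : HasFDerivAt H (Aeq : (O × E₁) →L[ℝ] I × E₂) ((0 : O), (0 : E₁)) := by
      rw [hAeqcoe]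
      exact ((πI.comp (ContinuousLinearMap.snd ℝ O E₁)).hasFDerivAt).prodMk hDG
    have hFat : ContDiffAt ℝ (⊤ : ℕ∞) F 0 := hF.contDiffAt (hUopen.mem_nhds hU0)
    have hHsmooth : ContDiffAt ℝ (⊤ : ℕ∞) H ((0 : O), (0 : E₁)) := by
      apply ContDiffAt.prodMk
      · exact (πI.comp (ContinuousLinearMap.snd ℝ O E₁)).contDiff.contDiffAt
      · exact ((O.subtypeL.comp (ContinuousLinearMap.fst ℝ O E₁)).contDiff.contDiffAt).add
          (hFat.comp ((0 : O), (0 : E₁)) (ContinuousLinearMap.snd ℝ O E₁).contDiff.contDiffAt)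
    -- the partial homeomorphism
    set h := hHsmooth.toOpenPartialHomeomorph H hHderiv (by simp) with hhdef
    have hcoe : ∀ p, h p = H p := fun p => rfl
    have hsrc : ((0 : O), (0 : E₁)) ∈ h.source :=
      hHsmooth.mem_toOpenPartialHomeomorph_source hHderiv (by simp)
    have htgt : (0 : I × E₂) ∈ h.target := by
      have := hHsmooth.image_mem_toOpenPartialHomeomorph_target hHderiv (by simp)
      rwa [hH0] at this
    set ψ : I × E₂ → O × E₁ := ⇑h.symm with hψdef
    have hψ_smooth : ContDiffAt ℝ (⊤ : ℕ∞) ψ (0 : I × E₂) := by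
      have := hHsmooth.to_localInverse (f' := Aeq) hHderiv (by simp)
      rw [hH0] at this
      exact this
    obtain ⟨t, ht_nhds, ht_smooth⟩ : ∃ t ∈ nhds (0 : I × E₂), ContDiffOn ℝ (⊤ : ℕ∞) ψ t := by
      have hHat : ∀ p : O × E₁, p.2 ∈ U → ContDiffAt ℝ (⊤ : ℕ∞) H p := by
        intro p hp
        apply ContDiffAt.prodMk
        · exact (πI.comp (ContinuousLinearMap.snd ℝ O E₁)).contDiff.contDiffAt
        · exact ((O.subtypeL.comp (ContinuousLinearMap.fst ℝ O E₁)).contDiff.contDiffAt).add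
            ((hF.contDiffAt (hUopen.mem_nhds hp)).comp p
              (ContinuousLinearMap.snd ℝ O E₁).contDiff.contDiffAt)
      set N : Set (O × E₁) := (Prod.snd ⁻¹' U) ∩ (fderiv ℝ H ⁻¹'
        Set.range ((↑) : ((O × E₁) ≃L[ℝ] I × E₂) → (O × E₁) →L[ℝ] I × E₂)) with hNdef
      have hfdc : ContinuousAt (fderiv ℝ H) ((0 : O), (0 : E₁)) :=
        (hHsmooth.fderiv_right (m := 0) (by simp)).continuousAt
      have hN : N ∈ nhds ((0 : O), (0 : E₁)) := by
        refine Filter.inter_mem ((hUopen.preimage continuous_snd).mem_nhds hU0) ?_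
        apply hfdc.preimage_mem_nhds
        rw [hHderiv.fderiv]
        exact ContinuousLinearEquiv.isOpen.mem_nhds ⟨Aeq, rfl⟩
      have hs0 : h.symm 0 = ((0 : O), (0 : E₁)) := by
        have hli := h.left_inv hsrc
        rwa [hcoe, hH0] at hli
      refine ⟨h.target ∩ h.symm ⁻¹' N, Filter.inter_mem (h.open_target.mem_nhds htgt)
        ((h.continuousAt_symm htgt).preimage_mem_nhds (by rw [hs0]; exact hN)), ?_⟩
      rintro y ⟨hyt, hyN⟩
      obtain ⟨hyU, e, he⟩ := hyN
      have hc := hHat _ hyU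
      have hd : HasFDerivAt H (e : (O × E₁) →L[ℝ] I × E₂) (h.symm y) := by
        rw [he]; exact (hc.differentiableAt (by simp)).hasFDerivAt
      exact (h.contDiffAt_symm hyt hd hc).contDiffWithinAt
    set T : Set (I × E₂) := interior t ∩ h.target with hTdef
    have hTopen : IsOpen T := isOpen_interior.inter h.open_target
    have hT0 : (0 : I × E₂) ∈ T := ⟨mem_interior_iff_mem_nhds.mpr ht_nhds, htgt⟩
    have hTsub : T ⊆ h.target := Set.inter_subset_right
    have hψT : ContDiffOn ℝ (⊤ : ℕ∞) ψ T :=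
      ht_smooth.mono (Set.Subset.trans Set.inter_subset_left interior_subset)
    -- W and V
    set W : Set (O × E₁) := h.source ∩ h ⁻¹' T with hWdef
    have hWopen : IsOpen W :=
      h.continuousOn.isOpen_inter_preimage h.open_source hTopen
    have hW0 : ((0 : O), (0 : E₁)) ∈ W := by
      refine ⟨hsrc, ?_⟩
      show h ((0 : O), (0 : E₁)) ∈ T
      rw [hcoe, hH0]
      exact hT0
    set V : Set I := (fun i : I => ((i, 0) : I × E₂)) ⁻¹' T with hVdef
    have hVopen : IsOpen V :=
      hTopen.preimage (continuous_id.prodMk continuous_const)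
    have hV0 : (0 : I) ∈ V := by
      show ((0 : I), (0 : E₂)) ∈ T
      exact hT0
    -- the graph maps
    set φO : I → O := fun i => (ψ ((i, 0) : I × E₂)).1 with hφOdef
    set φZ : I → Z := fun i => πZ (ψ ((i, 0) : I × E₂)).2 with hφZdef
    have hψV_smooth : ContDiffOn ℝ (⊤ : ℕ∞) (fun i : I => ψ ((i, 0) : I × E₂)) V := by
      have hemb : ContDiff ℝ (⊤ : ℕ∞) (fun i : I => ((i, 0) : I × E₂)) :=
        contDiff_id.prodMk contDiff_const
      exact hψT.comp hemb.contDiffOn (fun i hi => hi)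
    have hφO_smooth : ContDiffOn ℝ (⊤ : ℕ∞) φO V := (contDiff_fst.comp_contDiffOn hψV_smooth)
    have hφZ_smooth : ContDiffOn ℝ (⊤ : ℕ∞) φZ V :=
      (πZ.contDiff.comp contDiff_snd).comp_contDiffOn hψV_smooth
    -- values at 0
    have hψ0 : ψ (((0 : I), (0 : E₂)) : I × E₂) = ((0 : O), (0 : E₁)) := by
      have hli := h.left_inv hsrc
      have : h ((0 : O), (0 : E₁)) = (((0 : I), (0 : E₂)) : I × E₂) := by
        rw [hcoe, hH0]; rfl
      rwa [this] at hli
    have hφO0 : φO 0 = 0 := by rw [hφOdef]; simp only; rw [hψ0]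
    have hφZ0 : φZ 0 = 0 := by rw [hφZdef]; simp only; rw [hψ0]; exact map_zero πZ
    refine ⟨V, W, φO, φZ, hVopen, hV0, hWopen, hW0, hφO_smooth, hφZ_smooth, hφO0, hφZ0, ?_⟩
    -- the set equality
    apply Set.Subset.antisymm
    · rintro p ⟨hp0, hpsrc, hpT⟩
      simp only [Set.mem_setOf_eq] at hp0
      have hHp : H p = ((πI p.2, 0) : I × E₂) := by
        rw [hHdef]; simp only; rw [hp0]
      have hiV : πI p.2 ∈ V := by
        show ((πI p.2, 0) : I × E₂) ∈ T
        rw [← hHp, ← hcoe]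
        exact hpT
      refine ⟨πI p.2, hiV, ?_⟩
      have hψp : ψ ((πI p.2, 0) : I × E₂) = p := by
        rw [← hHp, ← hcoe]
        exact h.left_inv hpsrc
      simp only
      rw [hφOdef, hφZdef]
      simp only
      rw [hψp]
      exact Prod.ext rfl (hdec p.2)
    · rintro _ ⟨i, hi, rfl⟩
      have hiT : ((i, 0) : I × E₂) ∈ T := hi
      set q : O × E₁ := ψ ((i, 0) : I × E₂) with hqdef
      have hqsrc : q ∈ h.source := h.map_target (hTsub hiT)
      have hhq : h q = ((i, 0) : I × E₂) := h.right_inv (hTsub hiT)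
      have hHq : H q = ((i, 0) : I × E₂) := by rw [← hcoe]; exact hhq
      have hq1 : πI q.2 = i := congrArg Prod.fst hHq
      have hq2 : (q.1 : E₂) + F q.2 = 0 := congrArg Prod.snd hHq
      have heq : (φO i, (i : E₁) + ((φZ i : Z) : E₁)) = q := by
        rw [hφOdef, hφZdef]
        simp only
        refine Prod.ext rfl ?_
        show (i : E₁) + (πZ q.2 : E₁) = q.2
        rw [← hq1]
        exact hdec q.2
      show ((φO i, (i : E₁) + ((φZ i : Z) : E₁)) : O × E₁) ∈ _
      rw [heq]
      refine ⟨hq2, hqsrc, ?_⟩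
      show h q ∈ T
      rw [hhq]
      exact hiT
end

section
/- With the notation and hypotheses of the context: there is an open neighbourhood W' of 0 in E₁ such that F⁻¹(0) ∩ W' = {i + φ_Z(i) : i ∈ V, φ_O(i) = 0}, and the map i ↦ i + φ_Z(i) restricts to a homeomorphism from {i ∈ V : φ_O(i) = 0} (with the subspace topology inherited from I) onto F⁻¹(0) ∩ W' (with the subspace topology inherited from E₁). In particular, near 0 the zero set of the smooth map F between Banach spaces is homeomorphic to the zero set of the smooth map φ_O : V → O defined between finite-dimensional vector spaces. -/
/-- Under the Fredholm/IFT hypotheses, near `0` the zero set of `F` equals the image of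
`{i ∈ V : φO i = 0}` under `i ↦ i + φZ i`, and this map is a homeomorphism from
`{i ∈ V : φO i = 0}` (subspace topology of `ker P`) onto `F⁻¹(0) ∩ W'` (subspace topology
of `E₁`): the zero set of `F` is locally homeomorphic to the zero set of the
finite-dimensional map `φO`. -/
theorem zero_set_of_F_homeomorphic_finite_dimensional_zero_set
    (E₁ E₂ : Type*) [NormedAddCommGroup E₁] [NormedSpace ℝ E₁] [CompleteSpace E₁]
    [NormedAddCommGroup E₂] [NormedSpace ℝ E₂] [CompleteSpace E₂]
    (F : E₁ → E₂) (U : Set E₁) (hUopen : IsOpen U) (hU0 : (0 : E₁) ∈ U)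
    (hF : ContDiffOn ℝ (⊤ : ℕ∞) F U) (hF0 : F 0 = 0)
    (P : E₁ →L[ℝ] E₂) (hP : HasFDerivAt F P 0)
    (hkerfin : FiniteDimensional ℝ (LinearMap.ker (P : E₁ →ₗ[ℝ] E₂)))
    (Z : Submodule ℝ E₁) (hZclosed : IsClosed (Z : Set E₁))
    (hcompl₁ : IsCompl (LinearMap.ker (P : E₁ →ₗ[ℝ] E₂)) Z)
    (O : Submodule ℝ E₂) (hOfin : FiniteDimensional ℝ O)
    (hrangeclosed : IsClosed ((LinearMap.range (P : E₁ →ₗ[ℝ] E₂) : Submodule ℝ E₂) : Set E₂))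
    (hcompl₂ : IsCompl O (LinearMap.range (P : E₁ →ₗ[ℝ] E₂)))
    (G : O × E₁ → E₂) (hG : ∀ p : O × E₁, G p = (p.1 : E₂) + F p.2)
    -- the data provided by the implicit function theorem:
    (V : Set (LinearMap.ker (P : E₁ →ₗ[ℝ] E₂))) (W : Set (O × E₁))
    (φO : (LinearMap.ker (P : E₁ →ₗ[ℝ] E₂)) → O) (φZ : (LinearMap.ker (P : E₁ →ₗ[ℝ] E₂)) → Z)
    (hVopen : IsOpen V) (hV0 : (0 : LinearMap.ker (P : E₁ →ₗ[ℝ] E₂)) ∈ V)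
    (hWopen : IsOpen W) (hW0 : ((0 : O), (0 : E₁)) ∈ W)
    (hφO : ContDiffOn ℝ (⊤ : ℕ∞) φO V) (hφZ : ContDiffOn ℝ (⊤ : ℕ∞) φZ V)
    (hφO0 : φO 0 = 0) (hφZ0 : φZ 0 = 0)
    (hgraph : {p : O × E₁ | G p = 0} ∩ W =
      (fun i : LinearMap.ker (P : E₁ →ₗ[ℝ] E₂) => (φO i, (i : E₁) + (φZ i : E₁))) '' V) :
    ∃ W' : Set E₁, IsOpen W' ∧ (0 : E₁) ∈ W' ∧
      {x : E₁ | F x = 0} ∩ W' =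
        (fun i : LinearMap.ker (P : E₁ →ₗ[ℝ] E₂) => (i : E₁) + (φZ i : E₁)) '' {i ∈ V | φO i = 0} ∧
      ∃ h : {i : LinearMap.ker (P : E₁ →ₗ[ℝ] E₂) // i ∈ V ∧ φO i = 0} ≃ₜ {x : E₁ // F x = 0 ∧ x ∈ W'},
        ∀ i : {i : LinearMap.ker (P : E₁ →ₗ[ℝ] E₂) // i ∈ V ∧ φO i = 0},
          ((h i : E₁) = ((i : LinearMap.ker (P : E₁ →ₗ[ℝ] E₂)) : E₁) + (φZ (i : LinearMap.ker (P : E₁ →ₗ[ℝ] E₂)) : E₁)) := by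
  classical
  have hKclosed : IsClosed ((LinearMap.ker (P : E₁ →ₗ[ℝ] E₂) : Submodule ℝ E₁) : Set E₁) :=
    (LinearMap.ker (P : E₁ →ₗ[ℝ] E₂)).closed_of_finiteDimensional
  set π : E₁ →L[ℝ] LinearMap.ker (P : E₁ →ₗ[ℝ] E₂) :=
    (LinearMap.ker (P : E₁ →ₗ[ℝ] E₂)).linearProjOfClosedCompl Z hcompl₁ hKclosed hZclosed with hπ
  have hπleft : ∀ i : LinearMap.ker (P : E₁ →ₗ[ℝ] E₂), π (i : E₁) = i := by
    intro i
    simpa [hπ, Submodule.coe_continuous_linearProjOfClosedCompl'] using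
      Submodule.linearProjOfIsCompl_apply_left hcompl₁ i
  have hπright : ∀ z : Z, π (z : E₁) = 0 := by
    intro z
    simpa [hπ, Submodule.coe_continuous_linearProjOfClosedCompl'] using
      Submodule.linearProjOfIsCompl_apply_right hcompl₁ z
  have hπsum : ∀ (i : LinearMap.ker (P : E₁ →ₗ[ℝ] E₂)) (z : Z), π ((i : E₁) + (z : E₁)) = i := by
    intro i z
    rw [map_add, hπleft, hπright, add_zero]
  -- the key characterization of the zero set near 0
  have key : ∀ e : E₁, (F e = 0 ∧ ((0 : O), e) ∈ W) ↔
      ∃ i : LinearMap.ker (P : E₁ →ₗ[ℝ] E₂), (i ∈ V ∧ φO i = 0) ∧ e = (i : E₁) + (φZ i : E₁) := by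
    intro e
    constructor
    · rintro ⟨hFe, hWe⟩
      have hmem : ((0 : O), e) ∈ {p : O × E₁ | G p = 0} ∩ W := by
        refine ⟨?_, hWe⟩
        simp [Set.mem_setOf_eq, hG, hFe]
      rw [hgraph] at hmem
      obtain ⟨i, hiV, hi⟩ := hmem
      obtain ⟨h1, h2⟩ := Prod.ext_iff.mp hi
      exact ⟨i, ⟨hiV, h1⟩, h2.symm⟩
    · rintro ⟨i, ⟨hiV, hiO⟩, rfl⟩
      have hmem : (φO i, (i : E₁) + (φZ i : E₁)) ∈ {p : O × E₁ | G p = 0} ∩ W := by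
        rw [hgraph]; exact ⟨i, hiV, rfl⟩
      rw [hiO] at hmem
      obtain ⟨hG0, hWm⟩ := hmem
      refine ⟨?_, hWm⟩
      simpa [hG] using hG0
  refine ⟨{e : E₁ | ((0 : O), e) ∈ W}, ?_, hW0, ?_, ?_⟩
  · exact hWopen.preimage (continuous_const.prodMk continuous_id)
  · ext e
    simp only [Set.mem_inter_iff, Set.mem_setOf_eq, Set.mem_image, Set.mem_sep_iff]
    constructor
    · rintro ⟨h1, h2⟩
      obtain ⟨i, hi, he⟩ := (key e).mp ⟨h1, h2⟩
      exact ⟨i, hi, he.symm⟩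
    · rintro ⟨i, hi, rfl⟩
      exact (key _).mpr ⟨i, hi, rfl⟩
  · -- the homeomorphism
    have fwd : ∀ i : {i : LinearMap.ker (P : E₁ →ₗ[ℝ] E₂) // i ∈ V ∧ φO i = 0},
        F ((i.1 : E₁) + (φZ i.1 : E₁)) = 0 ∧
          ((i.1 : E₁) + (φZ i.1 : E₁)) ∈ {e : E₁ | ((0 : O), e) ∈ W} :=
      fun i => (key _).mpr ⟨i.1, i.2, rfl⟩
    have hinv : ∀ x : E₁, F x = 0 → ((0 : O), x) ∈ W →
        (π x ∈ V ∧ φO (π x) = 0) ∧ x = ((π x : LinearMap.ker (P : E₁ →ₗ[ℝ] E₂)) : E₁) + (φZ (π x) : E₁) := by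
      intro x h1 h2
      obtain ⟨i, ⟨hiV, hiO⟩, hx⟩ := (key x).mp ⟨h1, h2⟩
      have hπx : π x = i := by rw [hx]; exact hπsum i (φZ i)
      rw [hπx]
      exact ⟨⟨hiV, hiO⟩, hx⟩
    let eqv : {i : LinearMap.ker (P : E₁ →ₗ[ℝ] E₂) // i ∈ V ∧ φO i = 0} ≃
        {x : E₁ // F x = 0 ∧ x ∈ {e : E₁ | ((0 : O), e) ∈ W}} :=
    { toFun := fun i => ⟨(i.1 : E₁) + (φZ i.1 : E₁), fwd i⟩
      invFun := fun x => ⟨π x.1, (hinv x.1 x.2.1 x.2.2).1⟩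
      left_inv := fun i => Subtype.ext (hπsum i.1 (φZ i.1))
      right_inv := fun x => Subtype.ext ((hinv x.1 x.2.1 x.2.2).2).symm }
    have hcontZ : Continuous fun i : {i : LinearMap.ker (P : E₁ →ₗ[ℝ] E₂) // i ∈ V ∧ φO i = 0} => (φZ i.1 : E₁) :=
      continuous_subtype_val.comp
        (hφZ.continuousOn.comp_continuous continuous_subtype_val fun i => i.2.1)
    have hcont1 : Continuous fun i : {i : LinearMap.ker (P : E₁ →ₗ[ℝ] E₂) // i ∈ V ∧ φO i = 0} =>
        (i.1 : E₁) + (φZ i.1 : E₁) :=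
      (continuous_subtype_val.comp continuous_subtype_val).add hcontZ
    have hcont2 : Continuous fun x : {x : E₁ // F x = 0 ∧ x ∈ {e : E₁ | ((0 : O), e) ∈ W}} =>
        π x.1 := π.continuous.comp continuous_subtype_val
    exact ⟨⟨eqv, hcont1.subtype_mk _, hcont2.subtype_mk _⟩, fun i => rfl⟩
end

section
/- Let n ≥ 1, let U ⊆ ℝⁿ be open, let a > 0, and set L := U × (a,∞) ⊆ ℝⁿ × ℝ. Let α be a smooth closed 1-form on L, let λ < 0 and C > 0, and assume the following weighted decay bounds hold for all (x,r) ∈ L and all v ∈ ℝⁿ: |α(x,r)(0,1)| ≤ C·r^{λ−1}, |α(x,r)(v,0)| ≤ C·r^{λ}·‖v‖, and |∂_r(α(x,r)(v,0))| ≤ C·r^{λ−1}·‖v‖ (these are the coordinate expressions of a closed 1-form lying in the weighted space C¹_{λ−1} on an asymptotically conical end). Define A : L → ℝ by A(x,r) := −∫_r^∞ α(x,ρ)(0,1) dρ. Then this integral converges absolutely, A is differentiable with DA(x,r) = α(x,r) for all (x,r) ∈ L (so α = dA is exact on L), and |A(x,r)| ≤ (C/(−λ))·r^{λ} for all (x,r)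 ∈ L. -/
open Set MeasureTheory intervalIntegral Filter Topology

private lemma split_Ioi {g : ℝ → ℝ} {r r₀ : ℝ}
    (hg_r : IntegrableOn g (Ioi r)) (hg0 : IntegrableOn g (Ioi r₀)) :
    ∫ ρ in Ioi r, g ρ = (∫ ρ in r..r₀, g ρ) + ∫ ρ in Ioi r₀, g ρ := by
  rcases le_total r r₀ with h | h
  · rw [intervalIntegral.integral_of_le h, ← Ioc_union_Ioi_eq_Ioi h,
      setIntegral_union (Ioc_disjoint_Ioi_same) measurableSet_Ioi
        (hg_r.mono_set Ioc_subset_Ioi_self) hg0]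
  · have : ∫ ρ in Ioi r₀, g ρ = (∫ ρ in Ioc r₀ r, g ρ) + ∫ ρ in Ioi r, g ρ := by
      rw [← Ioc_union_Ioi_eq_Ioi h,
        setIntegral_union (Ioc_disjoint_Ioi_same) measurableSet_Ioi
          (hg0.mono_set Ioc_subset_Ioi_self) hg_r]
    rw [intervalIntegral.integral_symm, intervalIntegral.integral_of_le h]
    linarith

set_option maxHeartbeats 2000000 in
/-- On an asymptotically conical end `L = U × (a,∞)`, a smooth closed 1-form `α` lying in the
weighted space `C¹_{λ−1}` with `λ < 0` is exact: `A(x,r) := −∫_r^∞ α(x,ρ)(0,1) dρ` converges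
absolutely, `DA = α` on `L`, and `|A(x,r)| ≤ (C/(−λ))·r^λ`. -/
theorem closed_one_form_with_decay_is_exact_on_AC_end
    (n : ℕ) (hn : 1 ≤ n) (U : Set (Fin n → ℝ)) (hUopen : IsOpen U)
    (a : ℝ) (ha : 0 < a)
    (L : Set ((Fin n → ℝ) × ℝ)) (hL : L = U ×ˢ Set.Ioi a)
    (α : (Fin n → ℝ) × ℝ → ((Fin n → ℝ) × ℝ →L[ℝ] ℝ))
    (hαsmooth : ContDiffOn ℝ (⊤ : ℕ∞) α L)
    (hαclosed : ∀ p ∈ L, ∀ u v : (Fin n → ℝ) × ℝ,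
      fderiv ℝ α p u v = fderiv ℝ α p v u)
    (lam C : ℝ) (hlam : lam < 0) (hC : 0 < C)
    (hb1 : ∀ p ∈ L, |α p ((0 : Fin n → ℝ), (1 : ℝ))| ≤ C * p.2 ^ (lam - 1))
    (hb2 : ∀ p ∈ L, ∀ v : Fin n → ℝ, |α p (v, (0 : ℝ))| ≤ C * p.2 ^ lam * ‖v‖)
    (hb3 : ∀ p ∈ L, ∀ v : Fin n → ℝ,
      |deriv (fun ρ : ℝ => α (p.1, ρ) (v, (0 : ℝ))) p.2| ≤ C * p.2 ^ (lam - 1) * ‖v‖)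
    (A : (Fin n → ℝ) × ℝ → ℝ)
    (hA : ∀ p : (Fin n → ℝ) × ℝ,
      A p = -∫ ρ in Set.Ioi p.2, α (p.1, ρ) ((0 : Fin n → ℝ), (1 : ℝ))) :
    (∀ p ∈ L, MeasureTheory.IntegrableOn
      (fun ρ : ℝ => α (p.1, ρ) ((0 : Fin n → ℝ), (1 : ℝ))) (Set.Ioi p.2)) ∧
    (∀ p ∈ L, HasFDerivAt A (α p) p) ∧
    (∀ p ∈ L, |A p| ≤ (C / (-lam)) * p.2 ^ lam) := by
  have hLopen : IsOpen L := hL ▸ hUopen.prod isOpen_Ioi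
  have hmemL : ∀ x ρ, ((x, ρ) : (Fin n → ℝ) × ℝ) ∈ L ↔ x ∈ U ∧ a < ρ := by
    intro x ρ; rw [hL]; simp [Set.mem_prod]
  have hcontα : ContinuousOn α L := hαsmooth.continuousOn
  have hDcont : ContinuousOn (fderiv ℝ α) L :=
    hαsmooth.continuousOn_fderiv_of_isOpen hLopen (by simp)
  have hdiffα : ∀ p ∈ L, DifferentiableAt ℝ α p := fun p hp =>
    (hαsmooth.contDiffAt (hLopen.mem_nhds hp)).differentiableAt (by simp)
  -- continuity of the slice ρ ↦ α (x, ρ) on Ioi a, for x ∈ U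
  have hslice_cont : ∀ x ∈ U, ContinuousOn (fun ρ : ℝ => α (x, ρ)) (Ioi a) := by
    intro x hx
    exact hcontα.comp (Continuous.continuousOn (by fun_prop))
      (fun ρ hρ => (hmemL x ρ).2 ⟨hx, hρ⟩)
  -- the rpow dominating function
  have hrpow_int : ∀ r > a, IntegrableOn (fun ρ : ℝ => C * ρ ^ (lam - 1)) (Ioi r) := by
    intro r hr
    exact (integrableOn_Ioi_rpow_of_lt (by linarith) (ha.trans hr)).const_mul C
  -- Part 1
  have part1 : ∀ x ∈ U, ∀ r, a < r → IntegrableOn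
      (fun ρ : ℝ => α (x, ρ) ((0 : Fin n → ℝ), (1 : ℝ))) (Ioi r) := by
    intro x hx r hr
    have hc : ContinuousOn (fun ρ : ℝ => α (x, ρ) ((0 : Fin n → ℝ), (1 : ℝ))) (Ioi r) :=
      (((hslice_cont x hx).mono (Ioi_subset_Ioi hr.le)).clm_apply continuousOn_const)
    refine (hrpow_int r hr).mono' (hc.aestronglyMeasurable measurableSet_Ioi) ?_
    filter_upwards [ae_restrict_mem measurableSet_Ioi] with ρ hρ
    exact hb1 (x, ρ) ((hmemL x ρ).2 ⟨hx, hr.trans hρ⟩)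
  -- Part 3
  have part3 : ∀ p ∈ L, |A p| ≤ (C / (-lam)) * p.2 ^ lam := by
    rintro ⟨x, r⟩ hp
    obtain ⟨hx, hr⟩ := (hmemL x r).1 hp
    rw [hA, abs_neg]
    have h1 : |∫ ρ in Ioi r, α (x, ρ) ((0 : Fin n → ℝ), (1 : ℝ))| ≤
        ∫ ρ in Ioi r, |α (x, ρ) ((0 : Fin n → ℝ), (1 : ℝ))| := by
      simpa [Real.norm_eq_abs] using MeasureTheory.norm_integral_le_integral_norm
        (μ := volume.restrict (Ioi r)) (fun ρ => α (x, ρ) ((0 : Fin n → ℝ), (1 : ℝ)))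
    have h2 : ∫ ρ in Ioi r, |α (x, ρ) ((0 : Fin n → ℝ), (1 : ℝ))| ≤
        ∫ ρ in Ioi r, C * ρ ^ (lam - 1) := by
      refine setIntegral_mono_on ((part1 x hx r hr).abs) (hrpow_int r hr)
        measurableSet_Ioi ?_
      intro ρ hρ
      exact hb1 (x, ρ) ((hmemL x ρ).2 ⟨hx, hr.trans hρ⟩)
    have h3 : ∫ ρ in Ioi r, C * ρ ^ (lam - 1) = C * (-r ^ (lam - 1 + 1) / (lam - 1 + 1)) := by
      rw [MeasureTheory.integral_const_mul, integral_Ioi_rpow_of_lt (by linarith) (ha.trans hr)]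
    have h4 : C * (-r ^ (lam - 1 + 1) / (lam - 1 + 1)) = (C / (-lam)) * r ^ lam := by
      have : lam - 1 + 1 = lam := by ring
      rw [this]; field_simp
    calc |∫ ρ in Ioi r, α (x, ρ) ((0 : Fin n → ℝ), (1 : ℝ))| ≤
        ∫ ρ in Ioi r, C * ρ ^ (lam - 1) := h1.trans h2
      _ = (C / (-lam)) * r ^ lam := by rw [h3, h4]
  have part2 : ∀ p ∈ L, HasFDerivAt A (α p) p := by
    classical
    -- slice derivatives
    have slice : ∀ x ∈ U, ∀ v : Fin n → ℝ, ∀ ρ ∈ Ioi a,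
        HasDerivAt (fun t : ℝ => α (x, t) (v, (0:ℝ)))
          (fderiv ℝ α (x, ρ) ((0 : Fin n → ℝ), (1 : ℝ)) (v, (0:ℝ))) ρ := by
      intro x hx v ρ hρ
      have h1 : HasDerivAt (fun t : ℝ => ((x, t) : (Fin n → ℝ) × ℝ)) ((0 : Fin n → ℝ), (1:ℝ)) ρ :=
        (hasDerivAt_const ρ x).prodMk (hasDerivAt_id ρ)
      have h2 := (hdiffα (x, ρ) ((hmemL x ρ).2 ⟨hx, hρ⟩)).hasFDerivAt.comp_hasDerivAt ρ h1
      exact (ContinuousLinearMap.apply ℝ ℝ (v, (0:ℝ))).hasFDerivAt.comp_hasDerivAt ρ h2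
    -- gD and its properties
    set gD : (Fin n → ℝ) → (Fin n → ℝ) → ℝ → ℝ := fun x v ρ =>
      fderiv ℝ α (x, ρ) ((0 : Fin n → ℝ), (1 : ℝ)) (v, (0:ℝ)) with hgD
    have gDcont : ∀ x ∈ U, ∀ v, ContinuousOn (gD x v) (Ioi a) := by
      intro x hx v
      have h0 : ContinuousOn (fun ρ : ℝ => fderiv ℝ α (x, ρ)) (Ioi a) :=
        hDcont.comp (Continuous.continuousOn (by fun_prop))
          (fun ρ hρ => (hmemL x ρ).2 ⟨hx, hρ⟩)
      exact (h0.clm_apply continuousOn_const).clm_apply continuousOn_const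
    have gDbound : ∀ x ∈ U, ∀ v, ∀ ρ ∈ Ioi a, |gD x v ρ| ≤ C * ρ ^ (lam - 1) * ‖v‖ := by
      intro x hx v ρ hρ
      have := (slice x hx v ρ hρ).deriv
      rw [hgD]
      simp only []
      rw [← this]
      exact hb3 (x, ρ) ((hmemL x ρ).2 ⟨hx, hρ⟩) v
    have gDint : ∀ x ∈ U, ∀ v, ∀ r, a < r → IntegrableOn (gD x v) (Ioi r) := by
      intro x hx v r hr
      refine ((hrpow_int r hr).mul_const ‖v‖).mono'
        (((gDcont x hx v).mono (Ioi_subset_Ioi hr.le)).aestronglyMeasurable measurableSet_Ioi) ?_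
      filter_upwards [ae_restrict_mem measurableSet_Ioi] with ρ hρ
      simpa [abs_of_pos] using gDbound x hx v ρ (hr.trans hρ)
    have gtend : ∀ x ∈ U, ∀ v, Tendsto (fun ρ : ℝ => α (x, ρ) (v, (0:ℝ))) atTop (𝓝 0) := by
      intro x hx v
      have h0 : Tendsto (fun ρ : ℝ => C * ρ ^ lam * ‖v‖) atTop (𝓝 0) := by
        have := (tendsto_rpow_neg_atTop (y := -lam) (by linarith)).const_mul C
        simp only [neg_neg, mul_zero] at this
        simpa [mul_zero, zero_mul] using this.mul_const ‖v‖
      refine squeeze_zero_norm' ?_ h0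
      filter_upwards [eventually_gt_atTop a] with ρ hρ
      exact hb2 (x, ρ) ((hmemL x ρ).2 ⟨hx, hρ⟩) v
    have ftc : ∀ x ∈ U, ∀ v, ∀ r, a < r →
        ∫ ρ in Ioi r, gD x v ρ = -(α (x, r) (v, (0:ℝ))) := by
      intro x hx v r hr
      have := integral_Ioi_of_hasDerivAt_of_tendsto
        (f := fun t : ℝ => α (x, t) (v, (0:ℝ))) (f' := gD x v) (a := r)
        ((slice x hx v r hr).continuousAt.continuousWithinAt)
        (fun ρ hρ => slice x hx v ρ (hr.trans hρ))
        (gDint x hx v r hr) (gtend x hx v)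
      simpa using this
    -- main
    rintro ⟨x₀, r₀⟩ hp₀
    obtain ⟨hx₀, hr₀⟩ := (hmemL x₀ r₀).1 hp₀
    obtain ⟨ε, hε, hball⟩ := Metric.isOpen_iff.1 hLopen _ hp₀
    have hballU : ∀ x, dist x x₀ < ε → x ∈ U := by
      intro x hx
      have : ((x, r₀) : (Fin n → ℝ) × ℝ) ∈ Metric.ball ((x₀, r₀) : (Fin n → ℝ) × ℝ) ε := by
        rw [Metric.mem_ball, Prod.dist_eq]
        simpa [dist_self] using max_lt hx hε
      exact ((hmemL x r₀).1 (hball this)).1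
    -- the parametric derivative
    set F' : (Fin n → ℝ) → ℝ → ((Fin n → ℝ) →L[ℝ] ℝ) := fun x ρ =>
      (ContinuousLinearMap.apply ℝ ℝ ((0 : Fin n → ℝ), (1:ℝ))).comp
        ((fderiv ℝ α (x, ρ)).comp (ContinuousLinearMap.inl ℝ (Fin n → ℝ) ℝ)) with hF'
    have hF'apply : ∀ x ρ v, F' x ρ v = fderiv ℝ α (x, ρ) (v, (0:ℝ)) ((0 : Fin n → ℝ), (1:ℝ)) :=
      fun _ _ _ => rfl
    have hF'norm : ∀ x ∈ U, ∀ ρ ∈ Ioi a, ‖F' x ρ‖ ≤ C * ρ ^ (lam - 1) := by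
      intro x hx ρ hρ
      refine ContinuousLinearMap.opNorm_le_bound _
        (mul_nonneg hC.le (Real.rpow_nonneg (ha.trans hρ).le _)) fun v => ?_
      rw [Real.norm_eq_abs, hF'apply, hαclosed (x, ρ) ((hmemL x ρ).2 ⟨hx, hρ⟩) (v, (0:ℝ))]
      exact gDbound x hx v ρ hρ
    have hF'diff : ∀ x ∈ U, ∀ ρ ∈ Ioi a,
        HasFDerivAt (fun y => α (y, ρ) ((0 : Fin n → ℝ), (1:ℝ))) (F' x ρ) x := by
      intro x hx ρ hρ
      have h1 := hasFDerivAt_prodMk_left (𝕜 := ℝ) x ρ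
      have h2 := (hdiffα (x, ρ) ((hmemL x ρ).2 ⟨hx, hρ⟩)).hasFDerivAt.comp x h1
      exact (ContinuousLinearMap.apply ℝ ℝ ((0 : Fin n → ℝ), (1:ℝ))).hasFDerivAt.comp x h2
    have hF'contx₀ : ContinuousOn (F' x₀) (Ioi a) := by
      have h0 : ContinuousOn (fun ρ : ℝ => fderiv ℝ α (x₀, ρ)) (Ioi a) :=
        hDcont.comp (Continuous.continuousOn (by fun_prop))
          (fun ρ hρ => (hmemL x₀ ρ).2 ⟨hx₀, hρ⟩)
      exact continuousOn_const.clm_comp (h0.clm_comp continuousOn_const)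
    have hF'int : Integrable (F' x₀) (volume.restrict (Ioi r₀)) := by
      refine (hrpow_int r₀ hr₀).mono'
        ((hF'contx₀.mono (Ioi_subset_Ioi hr₀.le)).aestronglyMeasurable measurableSet_Ioi) ?_
      filter_upwards [ae_restrict_mem measurableSet_Ioi] with ρ hρ
      exact hF'norm x₀ hx₀ ρ (hr₀.trans hρ)
    have key : HasFDerivAt
        (fun x => ∫ ρ in Ioi r₀, α (x, ρ) ((0 : Fin n → ℝ), (1:ℝ)))
        (∫ ρ in Ioi r₀, F' x₀ ρ) x₀ := by
      refine hasFDerivAt_integral_of_dominated_of_fderiv_le (hs := Metric.ball_mem_nhds x₀ hε)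
        (bound := fun ρ => C * ρ ^ (lam - 1)) ?_ (part1 x₀ hx₀ r₀ hr₀)
        hF'int.aestronglyMeasurable ?_ (hrpow_int r₀ hr₀) ?_
      · filter_upwards [hUopen.mem_nhds hx₀] with x hx
        exact (part1 x hx r₀ hr₀).aestronglyMeasurable
      · filter_upwards [ae_restrict_mem measurableSet_Ioi] with ρ hρ
        intro x hx
        exact hF'norm x (hballU x (by simpa [Metric.mem_ball] using hx)) ρ (hr₀.trans hρ)
      · filter_upwards [ae_restrict_mem measurableSet_Ioi] with ρ hρ
        intro x hx
        exact hF'diff x (hballU x (by simpa [Metric.mem_ball] using hx)) ρ (hr₀.trans hρ)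
    have Phi_apply : ∀ v, (∫ ρ in Ioi r₀, F' x₀ ρ) v = -(α (x₀, r₀) (v, (0:ℝ))) := by
      intro v
      rw [ContinuousLinearMap.integral_apply hF'int]
      rw [setIntegral_congr_fun measurableSet_Ioi (g := gD x₀ v) ?_]
      · exact ftc x₀ hx₀ v r₀ hr₀
      · intro ρ hρ
        show F' x₀ ρ v = gD x₀ v ρ
        rw [hF'apply, hαclosed (x₀, ρ) ((hmemL x₀ ρ).2 ⟨hx₀, hr₀.trans hρ⟩) (v, (0:ℝ))]
    -- the B part
    have hB : HasFDerivAt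
        (fun p : (Fin n → ℝ) × ℝ => -∫ ρ in Ioi r₀, α (p.1, ρ) ((0 : Fin n → ℝ), (1:ℝ)))
        ((-(∫ ρ in Ioi r₀, F' x₀ ρ)).comp (ContinuousLinearMap.fst ℝ (Fin n → ℝ) ℝ))
        (x₀, r₀) :=
      by have hk := key.neg; exact (hk.comp ((x₀, r₀) : (Fin n → ℝ) × ℝ) (hasFDerivAt_fst : HasFDerivAt (Prod.fst : (Fin n → ℝ) × ℝ → (Fin n → ℝ)) (ContinuousLinearMap.fst ℝ (Fin n → ℝ) ℝ) ((x₀, r₀) : (Fin n → ℝ) × ℝ)))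
    -- the G part
    set c : ℝ := α (x₀, r₀) ((0 : Fin n → ℝ), (1:ℝ)) with hc
    set LG : ((Fin n → ℝ) × ℝ) →L[ℝ] ℝ :=
      (ContinuousLinearMap.snd ℝ (Fin n → ℝ) ℝ).smulRight c with hLG
    have hG : HasFDerivAt
        (fun p : (Fin n → ℝ) × ℝ => ∫ ρ in r₀..p.2, α (p.1, ρ) ((0 : Fin n → ℝ), (1:ℝ)))
        LG ((x₀, r₀) : (Fin n → ℝ) × ℝ) := by
      rw [hasFDerivAt_iff_isLittleO]
      rw [Asymptotics.isLittleO_iff]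
      intro d hd
      have hfc : ContinuousAt (fun q : (Fin n → ℝ) × ℝ => α q ((0 : Fin n → ℝ), (1:ℝ))) (x₀, r₀) :=
        ((ContinuousLinearMap.apply ℝ ℝ ((0 : Fin n → ℝ), (1:ℝ))).continuous.continuousAt).comp
          (hcontα.continuousAt (hLopen.mem_nhds hp₀))
      obtain ⟨δ₁, hδ₁, hδ⟩ := Metric.continuousAt_iff.1 hfc d hd
      have hδ₂ : 0 < min δ₁ ε := lt_min hδ₁ hε
      filter_upwards [Metric.ball_mem_nhds ((x₀, r₀) : (Fin n → ℝ) × ℝ) hδ₂] with p hp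
      obtain ⟨x, r⟩ := p
      have hpL : ((x, r) : (Fin n → ℝ) × ℝ) ∈ L :=
        hball (Metric.ball_subset_ball (min_le_right _ _) hp)
      obtain ⟨hxU, hra⟩ := (hmemL x r).1 hpL
      have hdp : dist ((x, r) : (Fin n → ℝ) × ℝ) ((x₀, r₀) : (Fin n → ℝ) × ℝ) < min δ₁ ε :=
        Metric.mem_ball.1 hp
      have hdx : dist x x₀ < min δ₁ ε := lt_of_le_of_lt (by rw [Prod.dist_eq]; exact le_max_left _ _) hdp
      have hdr : dist r r₀ < min δ₁ ε := lt_of_le_of_lt (by rw [Prod.dist_eq]; exact le_max_right _ _) hdp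
      -- interval integrability
      have huIcc : uIcc r₀ r ⊆ Ioi a :=
        fun ρ hρ => lt_of_lt_of_le (lt_min hr₀ hra) hρ.1
      have hint : IntervalIntegrable (fun ρ : ℝ => α (x, ρ) ((0 : Fin n → ℝ), (1:ℝ))) volume r₀ r :=
        (((hslice_cont x hxU).mono huIcc).clm_apply continuousOn_const).intervalIntegrable
      have heq : (∫ ρ in r₀..r, α (x, ρ) ((0 : Fin n → ℝ), (1:ℝ)))
          - (∫ ρ in r₀..r₀, α (x₀, ρ) ((0 : Fin n → ℝ), (1:ℝ))) - LG ((x, r) - (x₀, r₀))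
          = ∫ ρ in r₀..r, (α (x, ρ) ((0 : Fin n → ℝ), (1:ℝ)) - c) := by
        rw [intervalIntegral.integral_same, intervalIntegral.integral_sub hint
          intervalIntegrable_const, intervalIntegral.integral_const]
        simp only [hLG, ContinuousLinearMap.smulRight_apply, ContinuousLinearMap.coe_snd',
          Prod.snd_sub, smul_eq_mul]
        ring
      rw [heq]
      have hbd : ∀ ρ ∈ uIoc r₀ r, ‖α (x, ρ) ((0 : Fin n → ℝ), (1:ℝ)) - c‖ ≤ d := by
        intro ρ hρ
        have hρr : dist ρ r₀ ≤ dist r r₀ := by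
          rw [mem_uIoc] at hρ
          rw [Real.dist_eq, Real.dist_eq]
          rcases hρ with ⟨h1, h2⟩ | ⟨h1, h2⟩
          · rw [abs_of_pos (by linarith), abs_of_nonneg (by linarith)]; linarith
          · rw [abs_of_nonpos (by linarith), abs_of_nonpos (by linarith)]; linarith
        have : dist ((x, ρ) : (Fin n → ℝ) × ℝ) ((x₀, r₀) : (Fin n → ℝ) × ℝ) < δ₁ := by
          rw [Prod.dist_eq]
          exact max_lt (hdx.trans_le (min_le_left _ _))
            (lt_of_le_of_lt hρr (hdr.trans_le (min_le_left _ _)))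
        exact (le_of_lt (by simpa [Real.dist_eq] using hδ this))
      calc ‖∫ ρ in r₀..r, (α (x, ρ) ((0 : Fin n → ℝ), (1:ℝ)) - c)‖
          ≤ d * |r - r₀| := intervalIntegral.norm_integral_le_of_norm_le_const hbd
        _ ≤ d * ‖((x, r) : (Fin n → ℝ) × ℝ) - (x₀, r₀)‖ := by
            refine mul_le_mul_of_nonneg_left ?_ hd.le
            have := norm_snd_le (((x, r) : (Fin n → ℝ) × ℝ) - (x₀, r₀))
            simpa [Prod.snd_sub, Real.norm_eq_abs] using this
    -- combine
    have hsum := hB.add hG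
    have hAeq : A =ᶠ[𝓝 ((x₀, r₀) : (Fin n → ℝ) × ℝ)]
        fun p : (Fin n → ℝ) × ℝ =>
          (-∫ ρ in Ioi r₀, α (p.1, ρ) ((0 : Fin n → ℝ), (1:ℝ)))
          + ∫ ρ in r₀..p.2, α (p.1, ρ) ((0 : Fin n → ℝ), (1:ℝ)) := by
      filter_upwards [hLopen.mem_nhds hp₀] with p hpL
      obtain ⟨x, r⟩ := p
      obtain ⟨hxU, hra⟩ := (hmemL x r).1 hpL
      rw [hA]
      have hsplit := split_Ioi (part1 x hxU r hra) (part1 x hxU r₀ hr₀)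
      simp only []
      rw [hsplit, intervalIntegral.integral_symm]
      ring
    have final := hsum.congr_of_eventuallyEq hAeq
    have hDeq : ((-(∫ ρ in Ioi r₀, F' x₀ ρ)).comp (ContinuousLinearMap.fst ℝ (Fin n → ℝ) ℝ)) + LG
        = α ((x₀, r₀) : (Fin n → ℝ) × ℝ) := by
      refine ContinuousLinearMap.ext fun w => ?_
      have hw : (w : (Fin n → ℝ) × ℝ) = (w.1, (0:ℝ)) + w.2 • ((0 : Fin n → ℝ), (1:ℝ)) := by
        refine Prod.ext ?_ ?_ <;> simp
      calc (((-(∫ ρ in Ioi r₀, F' x₀ ρ)).comp (ContinuousLinearMap.fst ℝ (Fin n → ℝ) ℝ)) + LG) w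
          = -((∫ ρ in Ioi r₀, F' x₀ ρ) w.1) + w.2 • c := by
            simp only [hLG, ContinuousLinearMap.add_apply, ContinuousLinearMap.comp_apply,
              ContinuousLinearMap.coe_fst', ContinuousLinearMap.neg_apply,
              ContinuousLinearMap.smulRight_apply, ContinuousLinearMap.coe_snd']
        _ = α (x₀, r₀) (w.1, (0:ℝ)) + w.2 • (α (x₀, r₀) ((0 : Fin n → ℝ), (1:ℝ))) := by
            rw [Phi_apply, neg_neg, hc]
        _ = α ((x₀, r₀) : (Fin n → ℝ) × ℝ) w := by
            conv_rhs => rw [hw]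
            rw [map_add, _root_.map_smul]
    rw [hDeq] at final
    exact final

  exact ⟨fun p hp => part1 p.1 ((hmemL p.1 p.2).1 hp).1 p.2 ((hmemL p.1 p.2).1 hp).2, part2, part3⟩
end
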